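/- arXiv:1811.02739 — 4 statements merged into one kernel-verified Lean document; each statement's English description precedes it below -/
import Mathlib

section
/- Let p be an odd prime, n a positive integer, and for 1 ≤ i ≤ n let S_i be a finite set and f_i : S_i → F_p a function. For each i let v_{i,+} be the number of x ∈ S_i such that f_i(x) is a nonzero square in F_p, and v_{i,-} the number of x ∈ S_i such that f_i(x) is a nonsquare. Then the number of tuples (x_1, …, x_n, s) ∈ S_1 × ⋯ × S_n × F_p with s^2 = ∏_{i=1}^n f_i(x_i) equals ∏_{i=1}^n |S_i| + ∏_{i=1}^n (v_{i,+} − v_{i,-}). -/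
/-!
Since `quadraticChar F a + 1` counts the square roots of `a` in a finite field of odd
characteristic, the number of solutions is `∑ₓ (1 + χ (∏ᵢ fᵢ xᵢ))`. The constant part gives
`∏ᵢ |Sᵢ|`, and by multiplicativity of `χ` the character part factors as `∏ᵢ ∑_{y ∈ Sᵢ} χ (fᵢ y)`,
where each factor is (nonzero squares) − (nonsquares).
-/

open Finset

theorem MulChar.sum_apply_prod {ι R R' : Type*} [Fintype ι] [DecidableEq ι] [CommMonoid R]
    [CommRing R'] {S : ι → Type*} [∀ i, Fintype (S i)] (χ : MulChar R R') (f : ∀ i, S i → R) :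
    ∑ x : ∀ i, S i, χ (∏ i, f i (x i)) = ∏ i, ∑ y, χ (f i y) := by
  simp only [map_prod, prod_univ_sum, Fintype.piFinset_univ]

section FiniteField

variable {F : Type*} [Field F] [Fintype F] [DecidableEq F]

theorem quadraticChar_eq_indicator_sub_indicator (a : F) :
    quadraticChar F a =
      (if a ≠ 0 ∧ IsSquare a then 1 else 0) - (if ¬ IsSquare a then 1 else 0) := by
  by_cases h0 : a = 0
  · simp [h0]
  by_cases hs : IsSquare a
  · simp [h0, hs, (quadraticChar_one_iff_isSquare h0).mpr hs]
  · simp [h0, hs, quadraticChar_neg_one_iff_not_isSquare.mpr hs]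

theorem sum_quadraticChar_eq_card_sub_card {α : Type*} [Fintype α] (g : α → F) :
    ∑ x, quadraticChar F (g x) =
      (Nat.card {x // g x ≠ 0 ∧ IsSquare (g x)} : ℤ) - Nat.card {x // ¬ IsSquare (g x)} := by
  classical
  simp only [quadraticChar_eq_indicator_sub_indicator, sum_sub_distrib, sum_boole,
    Nat.card_eq_fintype_card, Fintype.card_subtype]

theorem card_sqrt_eq_quadraticChar_add_one (hF : ringChar F ≠ 2) (a : F) :
    (Nat.card {s : F // s ^ 2 = a} : ℤ) = quadraticChar F a + 1 := by
  rw [← quadraticChar_card_sqrts hF a, Set.toFinset_card, Nat.card_eq_fintype_card]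
  rfl

theorem card_sqrt_graph_eq (hF : ringChar F ≠ 2) {α : Type*} [Fintype α] (g : α → F) :
    (Nat.card {xs : α × F // xs.2 ^ 2 = g xs.1} : ℤ) =
      Nat.card α + ∑ x, quadraticChar F (g x) := by
  calc (Nat.card {xs : α × F // xs.2 ^ 2 = g xs.1} : ℤ)
      = ∑ x, (quadraticChar F (g x) + 1) := by
        rw [Nat.card_congr (Equiv.subtypeProdEquivSigmaSubtype fun x s => s ^ 2 = g x),
          Nat.card_sigma, Nat.cast_sum]
        exact sum_congr rfl fun x _ => card_sqrt_eq_quadraticChar_add_one hF (g x)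
    _ = Nat.card α + ∑ x, quadraticChar F (g x) := by
        rw [sum_add_distrib, sum_const, card_univ, Nat.card_eq_fintype_card, nsmul_one, add_comm]

end FiniteField

theorem statement0_general (p : ℕ) [Fact p.Prime] (hodd : Odd p)
    (n : ℕ) (S : Fin n → Type*) [∀ i, Fintype (S i)]
    (f : ∀ i, S i → ZMod p) :
    (Nat.card {xs : (∀ i, S i) × ZMod p // xs.2 ^ 2 = ∏ i, f i (xs.1 i)} : ℤ) =
      (∏ i, (Nat.card (S i) : ℤ)) +
      ∏ i, ((Nat.card {x : S i // f i x ≠ 0 ∧ IsSquare (f i x)} : ℤ) -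
            (Nat.card {x : S i // ¬ IsSquare (f i x)} : ℤ)) := by
  have hchar : ringChar (ZMod p) ≠ 2 := by
    rw [ZMod.ringChar_zmod_n]
    rintro rfl
    exact Nat.not_odd_iff_even.mpr even_two hodd
  rw [card_sqrt_graph_eq hchar fun x : ∀ i, S i => ∏ i, f i (x i), MulChar.sum_apply_prod,
    Nat.card_pi, Nat.cast_prod]
  simp only [sum_quadraticChar_eq_card_sub_card]

/-- Lemma 3.4 of the paper.
Let `p` be an odd prime, `n` a positive integer, and for `1 ≤ i ≤ n` let `S i` be a finite
set and `f i : S i → F_p` a function.  Let `v_{i,+}` be the number of `x ∈ S i` with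
`f i x` a nonzero square and `v_{i,-}` the number with `f i x` a nonsquare.  Then the number
of tuples `(x_1, …, x_n, s)` with `s ^ 2 = ∏ i, f i (x i)` equals
`∏ i, #(S i) + ∏ i, (v_{i,+} - v_{i,-})`. -/
theorem statement0 (p : ℕ) [Fact p.Prime] (hodd : Odd p)
    (n : ℕ) (hn : 0 < n) (S : Fin n → Type*) [∀ i, Fintype (S i)]
    (f : ∀ i, S i → ZMod p) :
    (Nat.card {xs : (∀ i, S i) × ZMod p // xs.2 ^ 2 = ∏ i, f i (xs.1 i)} : ℤ) =
      (∏ i, (Nat.card (S i) : ℤ)) +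
      ∏ i, ((Nat.card {x : S i // f i x ≠ 0 ∧ IsSquare (f i x)} : ℤ) -
            (Nat.card {x : S i // ¬ IsSquare (f i x)} : ℤ)) :=
  statement0_general p hodd n S f
end

section
/- Let p be an odd prime and λ ∈ F_p with λ ≠ 0 and λ ≠ -1. Set F = #{(y_1,y_2,y_4,y_5,t) ∈ F_p^5 : t^2 = λ·y_1·y_2·(λ+y_1)·(y_1+y_2)·(y_2+1)·y_4·y_5·(1+y_4)·(y_4+y_5)·(y_5+λ)}, A = #{(y_1,y_2,v) ∈ F_p^3 : v^2 = (λ+1)·y_1·y_2·(λ+y_1)·(y_1+y_2)·(y_2+1)} and B = #{(y_4,y_5,w) ∈ F_p^3 : w^2 = λ·(λ+1)·y_4·y_5·(1+y_4)·(y_4+y_5)·(y_5+λ)}. Then F = A·B − p^2·A − p^2·B + 2p^4. -/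
/-!
Write `χ` for the quadratic character of `𝔽_p`. Since `t² = a` has `1 + χ(a)` solutions, a
double cover `t² = f(x)` of a finite set `X` has `#X + Σₓ χ(f(x))` points. With
`P = y₁y₂(λ+y₁)(y₁+y₂)(y₂+1)` and `Q = y₄y₅(1+y₄)(y₄+y₅)(y₅+λ)` this gives
`F = p⁴ + χ(λ)·S_P·S_Q`, `A = p² + χ(λ+1)·S_P` and `B = p² + χ(λ)χ(λ+1)·S_Q`, where
`S_P, S_Q` are the character sums of `P, Q` over `𝔽_p²`; the identity follows from
`χ(λ+1)² = 1`.
-/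

section DoubleCover

variable {K : Type*} [Field K] [Fintype K] [DecidableEq K] {α β : Type*} [Fintype α] [Fintype β]

theorem card_sq_eq (hK : ringChar K ≠ 2) (f : α → K) :
    (Nat.card {v : α × K // v.2 ^ 2 = f v.1} : ℤ) =
      Fintype.card α + ∑ x, quadraticChar K (f x) := by
  have hfiber (x : α) :
      (Fintype.card {t : K // t ^ 2 = f x} : ℤ) = quadraticChar K (f x) + 1 := by
    rw [← quadraticChar_card_sqrts hK, Set.toFinset_card]
    rfl
  rw [Nat.card_eq_fintype_card,
    Fintype.card_congr (Equiv.subtypeProdEquivSigmaSubtype fun x t => t ^ 2 = f x),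
    Fintype.card_sigma, Nat.cast_sum, Finset.sum_congr rfl fun x _ => hfiber x,
    Finset.sum_add_distrib, Finset.sum_const, Finset.card_univ, nsmul_one, add_comm]

theorem card_sq_eq_const_mul (hK : ringChar K ≠ 2) (c : K) (f : α → K) :
    (Nat.card {v : α × K // v.2 ^ 2 = c * f v.1} : ℤ) =
      Fintype.card α + quadraticChar K c * ∑ x, quadraticChar K (f x) := by
  rw [card_sq_eq hK fun x => c * f x, Finset.mul_sum]
  simp only [map_mul]

theorem card_sq_eq_const_mul_mul (hK : ringChar K ≠ 2) (c : K) (f : α → K) (g : β → K) :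
    (Nat.card {v : (α × β) × K // v.2 ^ 2 = c * f v.1.1 * g v.1.2} : ℤ) =
      Fintype.card α * Fintype.card β +
        quadraticChar K c * (∑ x, quadraticChar K (f x)) * ∑ y, quadraticChar K (g y) := by
  rw [card_sq_eq hK fun x : α × β => c * f x.1 * g x.2,
    Fintype.card_prod, Nat.cast_mul, Fintype.sum_prod_type, mul_assoc, Finset.sum_mul_sum,
    Finset.mul_sum]
  simp only [map_mul, Finset.mul_sum, mul_assoc]

theorem card_sq_eq_const_mul_triple (hK : ringChar K ≠ 2) (c : K) (f : K × K → K) :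
    (Nat.card {w : K × K × K // w.2.2 ^ 2 = c * f (w.1, w.2.1)} : ℤ) =
      Fintype.card K ^ 2 + quadraticChar K c * ∑ y, quadraticChar K (f y) := by
  rw [Nat.card_congr ((Equiv.prodAssoc K K K).symm.subtypeEquiv
      (p := fun w => w.2.2 ^ 2 = c * f (w.1, w.2.1)) (q := fun v => v.2 ^ 2 = c * f v.1)
      fun _ => Iff.rfl),
    card_sq_eq_const_mul hK, Fintype.card_prod, Nat.cast_mul, sq]

theorem card_sq_eq_const_mul_mul_quintuple (hK : ringChar K ≠ 2) (c : K) (f g : K × K → K) :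
    (Nat.card {v : K × K × K × K × K //
        v.2.2.2.2 ^ 2 = c * f (v.1, v.2.1) * g (v.2.2.1, v.2.2.2.1)} : ℤ) =
      Fintype.card K ^ 4 +
        quadraticChar K c * (∑ y, quadraticChar K (f y)) * ∑ y, quadraticChar K (g y) := by
  let e : K × K × K × K × K ≃ ((K × K) × K × K) × K :=
    { toFun v := (((v.1, v.2.1), v.2.2.1, v.2.2.2.1), v.2.2.2.2)
      invFun v := (v.1.1.1, v.1.1.2, v.1.2.1, v.1.2.2, v.2)
      left_inv _ := rfl
      right_inv _ := rfl }
  rw [Nat.card_congr (e.subtypeEquiv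
      (p := fun v => v.2.2.2.2 ^ 2 = c * f (v.1, v.2.1) * g (v.2.2.1, v.2.2.2.1))
      (q := fun v => v.2 ^ 2 = c * f v.1.1 * g v.1.2) fun _ => Iff.rfl),
    card_sq_eq_const_mul_mul hK, Fintype.card_prod, Nat.cast_mul]
  ring

end DoubleCover

theorem statement1_general (p : ℕ) [Fact p.Prime] (hodd : Odd p)
    (lam : ZMod p) (h1 : lam ≠ -1)
    (F A B : ℕ)
    (hF : F = Nat.card {v : ZMod p × ZMod p × ZMod p × ZMod p × ZMod p //
      v.2.2.2.2 ^ 2 = lam * v.1 * v.2.1 * (lam + v.1) * (v.1 + v.2.1) * (v.2.1 + 1) *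
        v.2.2.1 * v.2.2.2.1 * (1 + v.2.2.1) * (v.2.2.1 + v.2.2.2.1) * (v.2.2.2.1 + lam)})
    (hA : A = Nat.card {w : ZMod p × ZMod p × ZMod p //
      w.2.2 ^ 2 = (lam + 1) * w.1 * w.2.1 * (lam + w.1) * (w.1 + w.2.1) * (w.2.1 + 1)})
    (hB : B = Nat.card {w : ZMod p × ZMod p × ZMod p //
      w.2.2 ^ 2 = lam * (lam + 1) * w.1 * w.2.1 * (1 + w.1) * (w.1 + w.2.1) * (w.2.1 + lam)}) :
    (F : ℤ) = A * B - p ^ 2 * A - p ^ 2 * B + 2 * p ^ 4 := by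
  have hK : ringChar (ZMod p) ≠ 2 := by
    rw [ZMod.ringChar_zmod_n]
    rintro rfl
    exact Nat.not_even_iff_odd.2 hodd even_two
  set χ := quadraticChar (ZMod p)
  let P (y : ZMod p × ZMod p) := y.1 * y.2 * (lam + y.1) * (y.1 + y.2) * (y.2 + 1)
  let Q (y : ZMod p × ZMod p) := y.1 * y.2 * (1 + y.1) * (y.1 + y.2) * (y.2 + lam)
  have hF' : (F : ℤ) = p ^ 4 + χ lam * (∑ y, χ (P y)) * ∑ y, χ (Q y) := by
    have h := card_sq_eq_const_mul_mul_quintuple hK lam P Q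
    rw [ZMod.card] at h
    rw [hF, ← h]
    congr! 4 with v
    dsimp only [P, Q]
    ring_nf
  have hA' : (A : ℤ) = p ^ 2 + χ (lam + 1) * ∑ y, χ (P y) := by
    have h := card_sq_eq_const_mul_triple hK (lam + 1) P
    rw [ZMod.card] at h
    rw [hA, ← h]
    congr! 4 with v
    dsimp only [P]
    ring_nf
  have hB' : (B : ℤ) = p ^ 2 + χ lam * χ (lam + 1) * ∑ y, χ (Q y) := by
    have h := card_sq_eq_const_mul_triple hK (lam * (lam + 1)) Q
    rw [ZMod.card, map_mul] at h
    rw [hB, ← h]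
    congr! 4 with v
    dsimp only [Q]
    ring_nf
  have hsq : χ (lam + 1) ^ 2 = 1 :=
    quadraticChar_sq_one fun h => h1 (eq_neg_of_add_eq_zero_left h)
  rw [hF', hA', hB']
  linear_combination (-(χ lam * (∑ y, χ (P y)) * ∑ y, χ (Q y))) * hsq

/-- Proposition 3.5 of the paper.
Let `p` be an odd prime and `λ ∈ F_p` with `λ ≠ 0, -1`.  Let `F` count the points
`(y₁,y₂,y₄,y₅,t) ∈ F_p^5` with
`t² = λ·y₁·y₂·(λ+y₁)·(y₁+y₂)·(y₂+1)·y₄·y₅·(1+y₄)·(y₄+y₅)·(y₅+λ)`,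
let `A` count `(y₁,y₂,v)` with `v² = (λ+1)·y₁·y₂·(λ+y₁)·(y₁+y₂)·(y₂+1)` and `B` count
`(y₄,y₅,w)` with `w² = λ·(λ+1)·y₄·y₅·(1+y₄)·(y₄+y₅)·(y₅+λ)`.  Then
`F = A·B − p²·A − p²·B + 2p⁴`. -/
theorem statement1 (p : ℕ) [Fact p.Prime] (hodd : Odd p)
    (lam : ZMod p) (h0 : lam ≠ 0) (h1 : lam ≠ -1)
    (F A B : ℕ)
    (hF : F = Nat.card {v : ZMod p × ZMod p × ZMod p × ZMod p × ZMod p //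
      v.2.2.2.2 ^ 2 = lam * v.1 * v.2.1 * (lam + v.1) * (v.1 + v.2.1) * (v.2.1 + 1) *
        v.2.2.1 * v.2.2.2.1 * (1 + v.2.2.1) * (v.2.2.1 + v.2.2.2.1) * (v.2.2.2.1 + lam)})
    (hA : A = Nat.card {w : ZMod p × ZMod p × ZMod p //
      w.2.2 ^ 2 = (lam + 1) * w.1 * w.2.1 * (lam + w.1) * (w.1 + w.2.1) * (w.2.1 + 1)})
    (hB : B = Nat.card {w : ZMod p × ZMod p × ZMod p //
      w.2.2 ^ 2 = lam * (lam + 1) * w.1 * w.2.1 * (1 + w.1) * (w.1 + w.2.1) * (w.2.1 + lam)}) :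
    (F : ℤ) = A * B - p ^ 2 * A - p ^ 2 * B + 2 * p ^ 4 :=
  statement1_general p hodd lam h1 F A B hF hA hB
end

section
/- Let p be an odd prime and let φ : F_p → ℤ be the quadratic character. Then #{(v,z_0,z_1,z_2) ∈ F_p^4 : (z_0,z_1,z_2) ≠ (0,0,0) and v^2 = z_0·z_1·z_2·(−z_0+z_1)·(z_1+z_2)·(z_0+z_2)} = (p−1)·(p^2 − φ(−1)·p + 1 + a_{-1,p}^2). -/
/-!
Write `χ` for the quadratic character, `q = #F` and `A(λ) = ∑ₓ χ(x(x-1)(x-λ))`, so that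
`a = -A(-1)`. Counting square roots gives `N = q³ - 1 + ∑_z χ(f z)`, and since the sextic `f`
is homogeneous and vanishes on `z₂ = 0`, `∑_z χ(f z) = (q - 1) S` with `S` its sum on the
chart `z₂ = 1`. Fixing one coordinate there leaves a twisted Legendre cubic in the other, so
`S = χ(-1) ∑_λ χ(λ(λ-1)) A(λ)`. Parametrising the conic `m² = λ(λ-1)` by `λ = 1/(1-s²)` and
applying Landen's 2-isogeny between the parameters `s²` and `u²`, `s = (u-1)/(u+1)`, turns
this into `S = χ(-1) ∑_u χ(u) A(u²)`. On the other hand, substituting `t = m/s` in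
`A(-1)² = ∑_{s,t} χ(s(s²-1)) χ(t(t²-1))` gives
`A(-1)² = χ(-1) ∑_u χ(u) A(u²) + q(1 + χ(-1))`.
-/

open Finset

lemma Fintype.sum_eq_sum_add_sub_of_ne {α M : Type*} [Fintype α] [DecidableEq α]
    [AddCommGroup M] {f g : α → M} (a : α) (h : ∀ x, x ≠ a → f x = g x) :
    ∑ x, f x = ∑ x, g x + (f a - g a) := by
  rw [← add_sum_erase _ f (mem_univ a), ← add_sum_erase _ g (mem_univ a)]
  rw [Finset.sum_congr rfl fun x hx => h x (ne_of_mem_erase hx)]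
  abel

section QuadraticChar

variable {F : Type*} [Field F] [Fintype F] [DecidableEq F]

local notation "χ" => quadraticChar F

lemma quadraticChar_sq_mul {a : F} (ha : a ≠ 0) (b : F) : χ (a ^ 2 * b) = χ b := by
  rw [map_mul, quadraticChar_sq_one' ha, one_mul]

lemma sum_quadraticChar_of_homogeneous {P : F × F × F → F} {k : ℕ}
    (h0 : ∀ x y, P (x, y, 0) = 0) (hP : ∀ t x y, P (t * x, t * y, t) = (t ^ k) ^ 2 * P (x, y, 1)) :
    ∑ z, χ (P z) = (Fintype.card F - 1) * ∑ x, ∑ y, χ (P (x, y, 1)) := by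
  have hrow : ∀ t, t ≠ 0 →
      ∑ x, ∑ y, χ (P (x, y, t)) = ∑ x, ∑ y, χ (P (x, y, 1)) := by
    intro t ht
    rw [← Equiv.sum_comp (Equiv.mulLeft₀ t ht)]
    refine sum_congr rfl fun x _ => ?_
    rw [← Equiv.sum_comp (Equiv.mulLeft₀ t ht)]
    refine sum_congr rfl fun y _ => ?_
    simp only [Equiv.mulLeft₀_apply]
    rw [hP, quadraticChar_sq_mul (pow_ne_zero k ht)]
  simp only [Fintype.sum_prod_type]
  simp_rw [sum_comm (γ := F) (s := univ) (t := univ) (f := fun y t => χ (P (_, y, t)))]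
  rw [sum_comm, Fintype.sum_eq_sum_add_sub_of_ne 0 hrow]
  simp [h0]
  ring

variable (F) in
def legendreSum (l : F) : ℤ := ∑ x, χ (x * (x - 1) * (x - l))

lemma legendreSum_one_sub (l : F) : legendreSum F (1 - l) = χ (-1) * legendreSum F l := by
  rw [legendreSum, legendreSum, mul_sum, ← Equiv.sum_comp (Equiv.subLeft 1)]
  refine sum_congr rfl fun x _ => ?_
  rw [← map_mul, Equiv.subLeft_apply]
  ring_nf

lemma legendreSum_inv {l : F} (hl : l ≠ 0) : legendreSum F l⁻¹ = χ l * legendreSum F l := by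
  rw [legendreSum, legendreSum, mul_sum, ← Equiv.sum_comp (Equiv.mulLeft₀ _ (inv_ne_zero hl))]
  refine sum_congr rfl fun x _ => ?_
  rw [← map_mul, Equiv.mulLeft₀_apply, ← quadraticChar_sq_mul (pow_ne_zero 2 hl)]
  congr 1
  field_simp

lemma legendreSum_inv_one_sub {l : F} (hl : l ≠ 1) :
    legendreSum F (1 - l)⁻¹ = χ (l - 1) * legendreSum F l := by
  rw [legendreSum_inv (sub_ne_zero.2 hl.symm), legendreSum_one_sub, ← mul_assoc, ← map_mul,
    mul_neg_one, neg_sub]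

lemma sum_quadraticChar_twisted_legendre {u : F} (hu : u ≠ 0) :
    ∑ v, χ (u * v * (v - u) * (u * v - 1)) = χ u * legendreSum F (u ^ 2) := by
  rw [legendreSum, mul_sum, ← Equiv.sum_comp (Equiv.mulLeft₀ _ (inv_ne_zero hu))]
  refine sum_congr rfl fun x _ => ?_
  rw [← map_mul, Equiv.mulLeft₀_apply, ← quadraticChar_sq_mul hu]
  congr 1
  field_simp

lemma sum_quadraticChar_quadrangle :
    ∑ x : F, ∑ y, χ (x * y * 1 * (-x + y) * (y + 1) * (x + 1))
      = χ (-1) * ∑ l, χ (l * (l - 1)) * legendreSum F l := by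
  rw [← Equiv.sum_comp (Equiv.neg F), mul_sum]
  refine sum_congr rfl fun l _ => ?_
  rw [← Equiv.sum_comp (Equiv.neg F), legendreSum, mul_sum, mul_sum]
  refine sum_congr rfl fun z _ => ?_
  simp only [Equiv.neg_apply, ← map_mul]
  ring_nf

variable (hF : ringChar F ≠ 2)
include hF

lemma card_filter_sq_eq (c : F) : (#{v : F | v ^ 2 = c} : ℤ) = χ c + 1 := by
  rw [← quadraticChar_card_sqrts hF c, Set.toFinset_ofPred]

lemma sum_comp_sq {M : Type*} [AddCommGroup M] (g : F → M) :
    ∑ s, g (s ^ 2) = ∑ z, (χ z + 1) • g z := by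
  rw [← sum_fiberwise univ (· ^ 2)]
  refine sum_congr rfl fun z _ => ?_
  rw [sum_congr rfl fun s hs => congrArg g (mem_filter.1 hs).2, sum_const,
    ← card_filter_sq_eq hF, natCast_zsmul]

lemma sum_quadraticChar_mul_sub_one : ∑ x : F, χ (x * (x - 1)) = -1 := by
  have hJ := jacobiSum_nontrivial_inv (quadraticChar_ne_one hF)
  rw [(quadraticChar_isQuadratic F).inv, jacobiSum] at hJ
  have h1 : χ (-1) * χ (-1) = 1 := by
    rw [← map_mul, neg_one_mul, neg_neg, map_one]
  calc ∑ x : F, χ (x * (x - 1)) = χ (-1) * ∑ x : F, χ x * χ (1 - x) := by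
        rw [mul_sum]; exact sum_congr rfl fun x _ => by rw [← map_mul, ← map_mul]; ring_nf
    _ = -1 := by rw [hJ, mul_neg, h1]

lemma sum_quadraticChar_sub_mul_sub (a b : F) :
    ∑ z, χ ((z - a) * (z - b)) = if a = b then (Fintype.card F : ℤ) - 1 else -1 := by
  split_ifs with hab
  · subst hab
    rw [Fintype.sum_eq_sum_add_sub_of_ne a (g := fun _ => 1) fun z hz => by
      rw [← sq, quadraticChar_sq_one' (sub_ne_zero.2 hz)]]
    simp [sub_eq_add_neg]
  · have hd : b - a ≠ 0 := sub_ne_zero.2 (Ne.symm hab)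
    rw [← Equiv.sum_comp (Equiv.addLeft a), ← Equiv.sum_comp (Equiv.mulLeft₀ _ hd),
      ← sum_quadraticChar_mul_sub_one hF]
    refine sum_congr rfl fun x _ => ?_
    rw [← quadraticChar_sq_mul hd (x * (x - 1))]
    congr 1
    simp only [Equiv.coe_addLeft, Equiv.mulLeft₀_apply]
    ring

lemma sum_quadraticChar_sub (a : F) : ∑ x, χ (x - a) = 0 :=
  (Equiv.sum_comp (Equiv.subRight a) χ).trans (quadraticChar_sum_zero hF)

lemma sum_quadraticChar_sub_left (a : F) : ∑ x, χ (a - x) = 0 :=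
  (Equiv.sum_comp (Equiv.subLeft a) χ).trans (quadraticChar_sum_zero hF)

lemma sum_quadraticChar_neg : ∑ x, χ (-x) = 0 :=
  (Equiv.sum_comp (Equiv.neg F) χ).trans (quadraticChar_sum_zero hF)

lemma legendreSum_zero : legendreSum F 0 = -χ (-1) := by
  rw [legendreSum, Fintype.sum_eq_sum_add_sub_of_ne 0 (g := fun x => χ (x - 1)) fun x hx => by
    rw [← quadraticChar_sq_mul hx (x - 1)]; ring_nf]
  rw [sum_quadraticChar_sub hF]
  simp

lemma legendreSum_one : legendreSum F 1 = -1 := by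
  have h : χ (-1) * χ (-1) = 1 := by rw [← map_mul, neg_one_mul, neg_neg, map_one]
  rw [← sub_zero (1 : F), legendreSum_one_sub, legendreSum_zero hF, mul_neg, h]

lemma sum_legendreSum : ∑ l, legendreSum F l = 0 := by
  simp_rw [legendreSum, map_mul]
  rw [sum_comm]
  refine sum_eq_zero fun x _ => ?_
  rw [← mul_sum, sum_quadraticChar_sub_left hF, mul_zero]

lemma sum_quadraticChar_add_one_mul_legendreSum :
    ∑ l, (χ (l * (l - 1)) + 1) * legendreSum F l
      = legendreSum F 0 + ∑ s, χ (s ^ 2 - 1) * legendreSum F (s ^ 2) := by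
  rw [← Equiv.sum_comp ((Equiv.subLeft 1).trans (Equiv.inv F)),
    Fintype.sum_eq_sum_add_sub_of_ne 1
      (g := fun m => (χ m + 1) * (χ (m - 1) * legendreSum F m)) fun m hm => ?_,
    sum_comp_sq hF (fun z => χ (z - 1) * legendreSum F z)]
  · simp [add_comm]
  · have h : (1 - m)⁻¹ * ((1 - m)⁻¹ - 1) = ((1 - m)⁻¹) ^ 2 * m := by
      field_simp [sub_ne_zero.2 hm.symm]
      ring
    simp only [Equiv.trans_apply, Equiv.subLeft_apply, Equiv.inv_apply]
    rw [h, quadraticChar_sq_mul (inv_ne_zero (sub_ne_zero.2 hm.symm)),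
      legendreSum_inv_one_sub hm]

/- Since `2 / 0 = 0`, the Möbius map `u ↦ (u - 1) / (u + 1)` written this way sends `-1` to `1`
and is a bijection of `F`. -/
omit [DecidableEq F] in
lemma sum_comp_one_sub_two_div {M : Type*} [AddCommMonoid M] (f : F → M) :
    ∑ u, f (1 - 2 / (u + 1)) = ∑ s, f s := by
  refine Function.Bijective.sum_comp (Finite.injective_iff_bijective.1 fun a b hab => ?_) f
  simpa [div_eq_mul_inv, Ring.two_ne_zero hF] using hab

lemma sum_quadraticChar_quartic (t : F) :
    ∑ w, χ ((w ^ 2 - 1) * (w ^ 2 - t ^ 2))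
      = legendreSum F (t ^ 2) + ∑ z, χ ((z - 1) * (z - t ^ 2)) := by
  rw [sum_comp_sq hF (fun z => χ ((z - 1) * (z - t ^ 2))), legendreSum, ← sum_add_distrib]
  refine sum_congr rfl fun z _ => ?_
  rw [smul_eq_mul, add_mul, one_mul, ← map_mul, mul_assoc]

/-- Landen's transformation: the Legendre curves with parameters `s²` and `u²`, where
`s = (u - 1) / (u + 1)`, are `2`-isogenous up to quadratic twists. The proof goes through the
quartic model `y² = (w² - 1)(w² - s²)` and the substitution `w = (v - 1) / (v + 1)`. -/
lemma quadraticChar_mul_legendreSum_landen {u : F} (hu : u + 1 ≠ 0) :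
    χ ((1 - 2 / (u + 1)) ^ 2 - 1) * legendreSum F ((1 - 2 / (u + 1)) ^ 2)
      = χ u * legendreSum F (u ^ 2) := by
  rcases eq_or_ne u 0 with rfl | hu0
  · norm_num
  set s := 1 - 2 / (u + 1)
  have hs : s ^ 2 - 1 = (2 / (u + 1)) ^ 2 * -u := by
    simp only [s]; field_simp; ring
  have hχs : χ (s ^ 2 - 1) = χ (-u) := by
    rw [hs, quadraticChar_sq_mul (div_ne_zero (Ring.two_ne_zero hF) hu)]
  have hs1 : 1 ≠ s ^ 2 := fun h => by
    rw [← h, sub_self] at hs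
    exact neg_ne_zero.2 hu0 ((mul_eq_zero.1 hs.symm).resolve_left
      (pow_ne_zero 2 (div_ne_zero (Ring.two_ne_zero hF) hu)))
  have hquartic : χ (s ^ 2 - 1) * ∑ w, χ ((w ^ 2 - 1) * (w ^ 2 - s ^ 2))
      = χ u * legendreSum F (u ^ 2) - χ (-u) := by
    rw [mul_sum, ← sum_comp_one_sub_two_div hF, ← sum_quadraticChar_twisted_legendre hu0,
      Fintype.sum_eq_sum_add_sub_of_ne (-1)
        (g := fun v => χ (u * v * (v - u) * (u * v - 1))) fun v hv => ?_]
    · have h : u * -1 * (-1 - u) * (u * -1 - 1) = (u + 1) ^ 2 * -u := by ring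
      rw [h, quadraticChar_sq_mul hu]
      simp [sub_eq_add_neg]
    · have hv : v + 1 ≠ 0 := fun h => hv (eq_neg_of_add_eq_zero_left h)
      have h2 := Ring.two_ne_zero hF
      rw [← map_mul, ← quadraticChar_sq_mul (a := 2 / (u + 1) ^ 2 * (2 / (v + 1) ^ 2) * 2)
        (by simp [hu, hv, h2]) (u * v * (v - u) * (u * v - 1))]
      congr 1
      simp only [s]
      field_simp
      ring
  rw [← add_sub_cancel_right (legendreSum F (s ^ 2)) (∑ z, χ ((z - 1) * (z - s ^ 2))),
    ← sum_quadraticChar_quartic hF, sum_quadraticChar_sub_mul_sub hF, if_neg hs1, mul_sub,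
    hquartic, hχs]
  ring

lemma sum_quadraticChar_sq_sub_one_mul_legendreSum :
    ∑ s, χ (s ^ 2 - 1) * legendreSum F (s ^ 2)
      = ∑ u, χ u * legendreSum F (u ^ 2) + χ (-1) := by
  rw [← sum_comp_one_sub_two_div hF, Fintype.sum_eq_sum_add_sub_of_ne (-1)
    (g := fun u => χ u * legendreSum F (u ^ 2))
    fun u hu => quadraticChar_mul_legendreSum_landen hF
      fun h => hu (eq_neg_of_add_eq_zero_left h)]
  simp [legendreSum_one hF]

lemma sum_quadraticChar_mul_legendreSum :
    ∑ l, χ (l * (l - 1)) * legendreSum F l = ∑ u, χ u * legendreSum F (u ^ 2) := by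
  have h := sum_quadraticChar_add_one_mul_legendreSum hF
  simp only [add_mul, one_mul, sum_add_distrib, sum_legendreSum hF, add_zero] at h
  rw [h, legendreSum_zero hF, sum_quadraticChar_sq_sub_one_mul_legendreSum hF]
  ring

lemma quadraticChar_mul_legendreSum_neg_one (s : F) :
    χ (s * (s - 1) * (s - -1)) * legendreSum F (-1)
      = ∑ m, χ (-m) * χ ((s ^ 2 - 1) * (s ^ 2 - m ^ 2)) := by
  rcases eq_or_ne s 0 with rfl | hs
  · have h : ∀ m : F, χ (-m) * χ ((0 ^ 2 - 1) * (0 ^ 2 - m ^ 2)) = χ (-m) := fun m => by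
      rcases eq_or_ne m 0 with rfl | hm
      · simp
      · rw [← map_mul, ← quadraticChar_sq_mul hm (-m)]; ring_nf
    rw [sum_congr rfl fun m _ => h m, sum_quadraticChar_neg hF]
    simp
  · rw [legendreSum, mul_sum, ← Equiv.sum_comp (Equiv.mulRight₀ _ (inv_ne_zero hs))]
    refine sum_congr rfl fun m _ => ?_
    rw [← map_mul, ← map_mul, Equiv.mulRight₀_apply, ← quadraticChar_sq_mul hs]
    congr 1
    field_simp
    ring

lemma legendreSum_neg_one_sq :
    legendreSum F (-1) ^ 2
      = χ (-1) * ∑ u, χ u * legendreSum F (u ^ 2) + Fintype.card F * (1 + χ (-1)) := by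
  conv_lhs => rw [sq]; enter [1]; rw [legendreSum]
  rw [sum_mul, sum_congr rfl fun s _ => quadraticChar_mul_legendreSum_neg_one hF s, sum_comm]
  have hfilter : ({m | 1 = m ^ 2} : Finset F) = {1, -1} := by
    ext m; simp [eq_comm (a := (1 : F))]
  have hL : ∀ m : F, χ (-m) * (if 1 = m ^ 2 then (Fintype.card F : ℤ) - 1 else -1)
      = Fintype.card F * (if 1 = m ^ 2 then χ (-m) else 0) - χ (-m) := fun m => by
    split_ifs <;> ring
  simp_rw [← mul_sum, sum_quadraticChar_quartic hF, sum_quadraticChar_sub_mul_sub hF, mul_add,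
    sum_add_distrib, hL, sum_sub_distrib, ← mul_sum, ← sum_filter, hfilter,
    sum_pair (Ring.neg_one_ne_one_of_char_ne_two hF).symm]
  rw [neg_neg, map_one, sum_quadraticChar_neg hF, mul_sum]
  simp_rw [← mul_assoc, ← map_mul, neg_one_mul]
  ring

lemma natCard_sq_eq (c : F) : (Nat.card {v : F // v ^ 2 = c} : ℤ) = χ c + 1 := by
  rw [Nat.card_eq_fintype_card, Fintype.card_subtype, card_filter_sq_eq hF]

lemma natCard_sq_eq_sum {α : Type*} [Fintype α] (f : α → F) :
    (Nat.card {x : α × F // x.2 ^ 2 = f x.1} : ℤ) = ∑ a, (χ (f a) + 1) := by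
  rw [Nat.card_congr (Equiv.subtypeProdEquivSigmaSubtype fun a v => v ^ 2 = f a), Nat.card_sigma,
    Nat.cast_sum]
  exact sum_congr rfl fun a _ => natCard_sq_eq hF (f a)

lemma natCard_sq_eq_of_ne_zero {α : Type*} [Fintype α] [Zero α] [DecidableEq α]
    {f : α → F} (hf : f 0 = 0) :
    (Nat.card {x : F × α // x.2 ≠ 0 ∧ x.1 ^ 2 = f x.2} : ℤ)
      = ∑ a, χ (f a) + (Fintype.card α - 1) := by
  have e : {x : F × α // x.2 ≠ 0 ∧ x.1 ^ 2 = f x.2}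
      ≃ Σ a : α, {v : F // a ≠ 0 ∧ v ^ 2 = f a} :=
    ((Equiv.prodComm F α).subtypeEquiv fun _ => Iff.rfl).trans
      (Equiv.subtypeProdEquivSigmaSubtype fun a v => a ≠ 0 ∧ v ^ 2 = f a)
  rw [Nat.card_congr e, Nat.card_sigma, Nat.cast_sum,
    Fintype.sum_eq_sum_add_sub_of_ne 0 (g := fun a => χ (f a) + 1) fun a ha => by
      simp only [ha, ne_eq, not_false_eq_true, true_and, natCard_sq_eq hF], sum_add_distrib]
  simp [hf]
  ring

lemma natCard_sq_eq_cube_sub_self :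
    (Nat.card {xy : F × F // xy.2 ^ 2 = xy.1 ^ 3 - xy.1} : ℤ)
      = Fintype.card F + legendreSum F (-1) := by
  rw [natCard_sq_eq_sum hF (fun x => x ^ 3 - x), sum_add_distrib, legendreSum, add_comm]
  congr 1
  · simp
  · exact sum_congr rfl fun x _ => by ring_nf

end QuadraticChar

/-- first part of Proposition 3.14 of the paper.
Let `p` be an odd prime, `φ` the quadratic character of `F_p`, and
`a = p − #{(x,y) : y² = x³ − x}` the trace of Frobenius of the elliptic curve of
conductor 32.  Then the number of `(v,z₀,z₁,z₂) ∈ F_p⁴` with `(z₀,z₁,z₂) ≠ (0,0,0)` and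
`v² = z₀·z₁·z₂·(−z₀+z₁)·(z₁+z₂)·(z₀+z₂)` equals `(p−1)·(p² − φ(−1)·p + 1 + a²)`. -/
theorem statement5 (p : ℕ) [Fact p.Prime] (hodd : Odd p)
    (a : ℤ)
    (ha : a = p - Nat.card {xy : ZMod p × ZMod p // xy.2 ^ 2 = xy.1 ^ 3 - xy.1}) :
    (Nat.card {v : ZMod p × ZMod p × ZMod p × ZMod p //
        (v.2.1, v.2.2.1, v.2.2.2) ≠ (0, 0, 0) ∧
        v.1 ^ 2 = v.2.1 * v.2.2.1 * v.2.2.2 * (-v.2.1 + v.2.2.1) *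
          (v.2.2.1 + v.2.2.2) * (v.2.1 + v.2.2.2)} : ℤ) =
      (p - 1) * (p ^ 2 - quadraticChar (ZMod p) (-1) * p + 1 + a ^ 2) := by
  have hF : ringChar (ZMod p) ≠ 2 := by
    rw [ZMod.ringChar_zmod_n]
    rintro rfl
    exact Nat.not_odd_iff_even.2 even_two hodd
  rw [natCard_sq_eq_cube_sub_self hF, ZMod.card] at ha
  refine (natCard_sq_eq_of_ne_zero hF (f := fun z : ZMod p × ZMod p × ZMod p =>
    z.1 * z.2.1 * z.2.2 * (-z.1 + z.2.1) * (z.2.1 + z.2.2) * (z.1 + z.2.2)) (by simp)).trans ?_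
  rw [sum_quadraticChar_of_homogeneous (k := 3) (fun x y => by simp) (fun t x y => by ring),
    sum_quadraticChar_quadrangle, sum_quadraticChar_mul_legendreSum hF]
  have hA := legendreSum_neg_one_sq hF (F := ZMod p)
  simp only [Fintype.card_prod, ZMod.card] at hA ⊢
  subst ha
  push_cast
  linear_combination (1 - (p : ℤ)) * hA
end

section
/- Let p be an odd prime and λ ∈ F_p with λ ≠ 0 and λ ≠ -1. Let M = p − #{(x,y) ∈ F_p^2 : y^2 = (x−1)·(x^2 − (λ+1)^{-1})}. Then M^2 = a_{λ,p}^2. -/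
/-!
Counting the solutions of `y² = f(x)` fibrewise over `x` gives `q + ∑ₓ χ(f x)`, with `χ` the
quadratic character. The substitution `x ↦ 1 - x` turns `(x - 1)(x² - (λ+1)⁻¹)` into
`-(x³ - 2x² + λ/(λ+1)·x)`, so the two curves are quadratic twists of each other by `-1`: their
character sums differ by the factor `χ(-1) = ±1`, and the squares of their traces agree.
-/

variable {F : Type*} [Field F] [Fintype F] [DecidableEq F]

theorem natCard_sq_eq_eq_card_add_sum_quadraticChar (hF : ringChar F ≠ 2) (f : F → F) :
    (Nat.card {xy : F × F // xy.2 ^ 2 = f xy.1} : ℤ)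
      = Fintype.card F + ∑ x, quadraticChar F (f x) := by
  have hfibre : ∀ x, ((Finset.univ.filter fun y : F => y ^ 2 = f x).card : ℤ)
      = quadraticChar F (f x) + 1 := fun x => by
    simpa [Set.toFinset_ofPred] using quadraticChar_card_sqrts hF (f x)
  have hcard : Nat.card {xy : F × F // xy.2 ^ 2 = f xy.1}
      = ∑ x, (Finset.univ.filter fun y : F => y ^ 2 = f x).card := by
    rw [Nat.card_eq_fintype_card,
      Fintype.card_congr (Equiv.subtypeProdEquivSigmaSubtype fun x y : F => y ^ 2 = f x),
      Fintype.card_sigma]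
    exact Finset.sum_congr rfl fun x _ => Fintype.card_subtype _
  rw [hcard]
  push_cast
  simp only [hfibre, Finset.sum_add_distrib, Finset.sum_const, Finset.card_univ, nsmul_eq_mul,
    mul_one]
  ring

theorem sum_quadraticChar_twist {f g : F → F} (e : F ≃ F) (c : F)
    (htwist : ∀ x, g (e x) = c * f x) :
    ∑ x, quadraticChar F (g x) = quadraticChar F c * ∑ x, quadraticChar F (f x) := by
  rw [Finset.mul_sum, ← e.sum_comp]
  simp only [htwist, map_mul]

theorem sq_card_sub_natCard_eq_of_twist (hF : ringChar F ≠ 2) {f g : F → F} (e : F ≃ F)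
    {c : F} (hc : c ≠ 0) (htwist : ∀ x, g (e x) = c * f x) :
    ((Fintype.card F : ℤ) - Nat.card {xy : F × F // xy.2 ^ 2 = g xy.1}) ^ 2
      = ((Fintype.card F : ℤ) - Nat.card {xy : F × F // xy.2 ^ 2 = f xy.1}) ^ 2 := by
  have hχc : quadraticChar F c ^ 2 = 1 := quadraticChar_sq_one hc
  rw [natCard_sq_eq_eq_card_add_sum_quadraticChar hF,
    natCard_sq_eq_eq_card_add_sum_quadraticChar hF, sum_quadraticChar_twist e c htwist]
  linear_combination (∑ x, quadraticChar F (f x)) ^ 2 * hχc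

theorem statement7_general (p : ℕ) [Fact p.Prime] (hodd : Odd p)
    (lam : ZMod p) (h1 : lam ≠ -1)
    (a : ℤ)
    (ha : a = p - Nat.card {xy : ZMod p × ZMod p //
      xy.2 ^ 2 = xy.1 ^ 3 - 2 * xy.1 ^ 2 + (lam / (lam + 1)) * xy.1})
    (M : ℤ)
    (hM : M = p - Nat.card {xy : ZMod p × ZMod p //
      xy.2 ^ 2 = (xy.1 - 1) * (xy.1 ^ 2 - (lam + 1)⁻¹)}) :
    M ^ 2 = a ^ 2 := by
  have hchar : ringChar (ZMod p) ≠ 2 := by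
    rw [ZMod.ringChar_zmod_n]
    rintro rfl
    exact absurd hodd (by decide)
  have hlam : lam + 1 ≠ 0 := fun h => h1 (eq_neg_of_add_eq_zero_left h)
  have htwist : ∀ x : ZMod p, (1 - x - 1) * ((1 - x) ^ 2 - (lam + 1)⁻¹)
      = -1 * (x ^ 3 - 2 * x ^ 2 + lam / (lam + 1) * x) := fun x => by
    field_simp
    ring
  subst ha hM
  simpa only [ZMod.card] using
    sq_card_sub_natCard_eq_of_twist (f := fun x => x ^ 3 - 2 * x ^ 2 + lam / (lam + 1) * x)
      (g := fun x => (x - 1) * (x ^ 2 - (lam + 1)⁻¹)) hchar (Equiv.subLeft 1)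
      (neg_ne_zero.mpr one_ne_zero) htwist

/-- Proposition 3.17 of the paper.
Let `p` be an odd prime and `λ ∈ F_p` with `λ ≠ 0, -1`; let
`a = p − #{(x,y) : y² = x³ − 2x² + (λ/(λ+1))x}` and
`M = p − #{(x,y) : y² = (x−1)·(x² − (λ+1)⁻¹)}`.  Then `M² = a²`. -/
theorem statement7 (p : ℕ) [Fact p.Prime] (hodd : Odd p)
    (lam : ZMod p) (h0 : lam ≠ 0) (h1 : lam ≠ -1)
    (a : ℤ)
    (ha : a = p - Nat.card {xy : ZMod p × ZMod p //
      xy.2 ^ 2 = xy.1 ^ 3 - 2 * xy.1 ^ 2 + (lam / (lam + 1)) * xy.1})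
    (M : ℤ)
    (hM : M = p - Nat.card {xy : ZMod p × ZMod p //
      xy.2 ^ 2 = (xy.1 - 1) * (xy.1 ^ 2 - (lam + 1)⁻¹)}) :
    M ^ 2 = a ^ 2 :=
  statement7_general p hodd lam h1 a ha M hM
end
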